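/- arXiv:2204.02353 — 8 statements merged into one kernel-verified Lean document; each statement's English description precedes it below -/
import Mathlib

section
/- In a q-matroid (E,r), if z is a one-dimensional subspace of cyc(A) then z ∈ Cyc(A), i.e., r(B+z) = r(B) for every subspace B ≤ A of codimension 1 in A. -/
/-!
Fix a codimension-1 subspace `B` of `A`. By monotonicity and submodularity of `r`, the vectors `v`
with `r (B ⊔ K ∙ v) = r B` form a subspace, the closure of `B`. Every generator of `cyc(A)` lies
in it, hence so does `cyc(A)` and every `z ≤ cyc(A)`. Since `z` is finitely generated, adding
its generators to `B` one at a time never raises the rank.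
-/

open Module Submodule

variable {K E : Type*} [Field K] [Fintype K] [AddCommGroup E] [Module K E]
  [FiniteDimensional K E]

/-- The dimension of a subspace, as an integer. -/
noncomputable def dimz {K E : Type*} [Field K] [AddCommGroup E] [Module K E]
    (A : Submodule K E) : ℤ :=
  (Module.finrank K ↥A : ℤ)

/-- `r` is the rank function of a `q`-matroid on `E`: axioms (R1)-(R3). -/
def QMat {K E : Type*} [Field K] [AddCommGroup E] [Module K E]
    (r : Submodule K E → ℤ) : Prop :=
  (∀ A : Submodule K E, 0 ≤ r A ∧ r A ≤ dimz A) ∧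
  (∀ A B : Submodule K E, A ≤ B → r A ≤ r B) ∧
  (∀ A B : Submodule K E, r (A ⊔ B) + r (A ⊓ B) ≤ r A + r B)

/-- A subspace is cyclic: every codimension-1 subspace has the same rank. -/
def QCyclic {K E : Type*} [Field K] [AddCommGroup E] [Module K E]
    (r : Submodule K E → ℤ) (A : Submodule K E) : Prop :=
  ∀ B ≤ A, Module.finrank K ↥A = Module.finrank K ↥B + 1 → r B = r A

/-- The cyclic operator: sum of all one-dimensional `x ≤ A` with
`r (B ⊔ x) = r B` for all codimension-1 subspaces `B` of `A`. -/
noncomputable def qcyc {K E : Type*} [Field K] [AddCommGroup E] [Module K E]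
    (r : Submodule K E → ℤ) (A : Submodule K E) : Submodule K E :=
  sSup {x : Submodule K E | x ≤ A ∧ Module.finrank K ↥x = 1 ∧
    ∀ B ≤ A, Module.finrank K ↥A = Module.finrank K ↥B + 1 → r (B ⊔ x) = r B}

/-- The closure operator: sum of all one-dimensional `x` with `r (A ⊔ x) = r A`. -/
noncomputable def qcl {K E : Type*} [Field K] [AddCommGroup E] [Module K E]
    (r : Submodule K E → ℤ) (A : Submodule K E) : Submodule K E :=
  sSup {x : Submodule K E | Module.finrank K ↥x = 1 ∧ r (A ⊔ x) = r A}

/-- A subspace `F` is a flat: adding any one-dimensional space outside `F`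
increases the rank. -/
def QFlat {K E : Type*} [Field K] [AddCommGroup E] [Module K E]
    (r : Submodule K E → ℤ) (F : Submodule K E) : Prop :=
  ∀ x : Submodule K E, Module.finrank K ↥x = 1 → ¬ x ≤ F → r F < r (F ⊔ x)

section RankClosure

variable {R M : Type*} [Semiring R] [AddCommMonoid M] [Module R M] {r : Submodule R M → ℤ}

theorem rank_sup_eq_of_le (hmono : Monotone r) {B x y : Submodule R M} (hxy : x ≤ y)
    (hy : r (B ⊔ y) = r B) : r (B ⊔ x) = r B :=
  le_antisymm (hy ▸ hmono (sup_le_sup_left hxy B)) (hmono le_sup_left)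

theorem rank_sup_sup_eq (hmono : Monotone r)
    (hsub : ∀ A B : Submodule R M, r (A ⊔ B) + r (A ⊓ B) ≤ r A + r B) {B x y : Submodule R M}
    (hx : r (B ⊔ x) = r B) (hy : r (B ⊔ y) = r B) : r (B ⊔ (x ⊔ y)) = r B := by
  have hsubmod := hsub (B ⊔ x) (B ⊔ y)
  rw [sup_sup_sup_comm, sup_idem, hx, hy] at hsubmod
  have hB_le_inf := hmono (le_inf le_sup_left le_sup_left : B ≤ (B ⊔ x) ⊓ (B ⊔ y))
  have hB_le_sup := hmono (le_sup_left : B ≤ B ⊔ (x ⊔ y))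
  omega

variable (hmono : Monotone r) (hsub : ∀ A B : Submodule R M, r (A ⊔ B) + r (A ⊓ B) ≤ r A + r B)

-- The vector-level form of the closure `qcl r B`; submodularity is what makes it a subspace.
def rankClosure (B : Submodule R M) : Submodule R M where
  carrier := {v | r (B ⊔ R ∙ v) = r B}
  zero_mem' := by simp
  add_mem' {u v} hu hv :=
    rank_sup_eq_of_le hmono
      ((span_singleton_le_iff_mem _ _).2 (add_mem_sup (mem_span_singleton_self u)
        (mem_span_singleton_self v)))
      (rank_sup_sup_eq hmono hsub hu hv)
  smul_mem' c v hv := rank_sup_eq_of_le hmono (span_singleton_smul_le R c v) hv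

theorem le_rankClosure_of_rank_sup_eq {B x : Submodule R M} (hx : r (B ⊔ x) = r B) :
    x ≤ rankClosure hmono hsub B := fun _ hv =>
  rank_sup_eq_of_le hmono ((span_singleton_le_iff_mem _ _).2 hv) hx

theorem rank_sup_eq_of_le_rankClosure {B x : Submodule R M} (hfg : x.FG)
    (hx : x ≤ rankClosure hmono hsub B) : r (B ⊔ x) = r B := by
  induction x, hfg using fg_induction with
  | singleton v => exact hx (mem_span_singleton_self v)
  | sup x y _ _ ihx ihy =>
    exact rank_sup_sup_eq hmono hsub (ihx (le_sup_left.trans hx)) (ihy (le_sup_right.trans hx))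

end RankClosure

theorem one_dim_of_qcyc_mem_Cyc_general (r : Submodule K E → ℤ) (hM : QMat r)
    (A z : Submodule K E) (hz : z ≤ qcyc r A) :
    ∀ B ≤ A, Module.finrank K ↥A = Module.finrank K ↥B + 1 → r (B ⊔ z) = r B := by
  intro B hB hcodim
  have hmono : Monotone r := fun _ _ h => hM.2.1 _ _ h
  have hqcyc : qcyc r A ≤ rankClosure hmono hM.2.2 B :=
    sSup_le fun x ⟨_, _, hx⟩ => le_rankClosure_of_rank_sup_eq hmono hM.2.2 (hx B hB hcodim)
  exact rank_sup_eq_of_le_rankClosure hmono hM.2.2 (IsNoetherian.noetherian z) (hz.trans hqcyc)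

/-- any one-dimensional subspace of `cyc(A)` belongs to `Cyc(A)`. -/
theorem one_dim_of_qcyc_mem_Cyc (r : Submodule K E → ℤ) (hM : QMat r)
    (A z : Submodule K E) (hz : z ≤ qcyc r A) (hz1 : Module.finrank K ↥z = 1) :
    ∀ B ≤ A, Module.finrank K ↥A = Module.finrank K ↥B + 1 → r (B ⊔ z) = r B :=
  one_dim_of_qcyc_mem_Cyc_general r hM A z hz
end

section
/- The cyclic operator of a q-matroid satisfies: (cyc1) cyc(A) ≤ A for all A; (cyc2) if A ≤ B then cyc(A) ≤ cyc(B); (cyc3) cyc(cyc(A)) = cyc(A). -/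
open Module Submodule

variable {K E : Type*} [Field K] [Fintype K] [AddCommGroup E] [Module K E]
  [FiniteDimensional K E]

/-!
Monotonicity comes from submodularity: if `x ≤ A ≤ B` and `C` is a hyperplane of `B` missing
`x`, then `A ⊓ C` is a hyperplane of `A` with `A = (A ⊓ C) ⊔ x`, hence `r A = r (A ⊓ C)`, and
submodularity for `A` and `C` transfers this to `r B = r C`.

For idempotence, `cyc(A)` is shown to be cyclic by induction on `dim A`. If `A` is cyclic, every
line of `A` satisfies the defining condition, so `cyc(A) = A`. Otherwise `A` has a hyperplane `H`
with `r H < r A`; then every line of `cyc(A)` lies in `H`, and it satisfies the condition in `H`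
because, comparing with a second hyperplane of `A` through a hyperplane `B` of `H`, the rank
increases by at most one from `B` to `A`. So `cyc(A) = cyc(H)`. Finally `cyc(S) = S` for cyclic `S`.
-/

section

omit [Fintype K] [FiniteDimensional K E]

theorem QMat.monotone {r : Submodule K E → ℤ} (hM : QMat r) : Monotone r :=
  fun A B hAB => hM.2.1 A B hAB

theorem QMat.rank_sup_le_add_one {r : Submodule K E → ℤ} (hM : QMat r) (B : Submodule K E)
    {x : Submodule K E} (hx : finrank K x = 1) : r (B ⊔ x) ≤ r B + 1 := by
  obtain ⟨hbound, -, hsub⟩ := hM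
  have hrx : r x ≤ 1 := by simpa [dimz, hx] using (hbound x).2
  linarith [hsub B x, (hbound (B ⊓ x)).1]

theorem qcyc_le (r : Submodule K E → ℤ) (A : Submodule K E) : qcyc r A ≤ A :=
  sSup_le fun _ hx => hx.1

theorem le_qcyc {r : Submodule K E → ℤ} {A x : Submodule K E} (hxA : x ≤ A)
    (hx : finrank K x = 1)
    (hcyc : ∀ B ≤ A, finrank K A = finrank K B + 1 → r (B ⊔ x) = r B) : x ≤ qcyc r A :=
  le_sSup ⟨hxA, hx, hcyc⟩

theorem qcyc_eq_self_of_qcyclic {r : Submodule K E → ℤ} (hr : Monotone r) {A : Submodule K E}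
    (hA : QCyclic r A) : qcyc r A = A := by
  refine le_antisymm (qcyc_le r A) fun a ha => ?_
  rcases eq_or_ne a 0 with rfl | ha0
  · exact zero_mem _
  have haA : K ∙ a ≤ A := (span_singleton_le_iff_mem a A).mpr ha
  refine le_qcyc haA (finrank_span_singleton ha0) (fun B hBA hdim => ?_) (mem_span_singleton_self a)
  have := hA B hBA hdim
  exact le_antisymm (this ▸ hr (sup_le hBA haA)) (hr le_sup_left)

variable [FiniteDimensional K E]

theorem sup_eq_of_finrank_eq_succ {A B x : Submodule K E} (hBA : B ≤ A)
    (hdim : finrank K A = finrank K B + 1) (hxA : x ≤ A) (hxB : ¬ x ≤ B) : B ⊔ x = A := by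
  refine eq_of_le_of_finrank_le (sup_le hBA hxA) ?_
  have := finrank_lt_finrank_of_lt (left_lt_sup.mpr hxB)
  omega

theorem finrank_eq_finrank_inf_add_one {A C : Submodule K E}
    (h : finrank K ↥(A ⊔ C) = finrank K C + 1) : finrank K A = finrank K ↥(A ⊓ C) + 1 := by
  have := finrank_sup_add_finrank_inf_eq A C
  omega

theorem qcyc_mono {r : Submodule K E → ℤ} (hM : QMat r) {A B : Submodule K E} (hAB : A ≤ B) :
    qcyc r A ≤ qcyc r B := by
  refine sSup_le fun x ⟨hxA, hx, hcyc⟩ => le_qcyc (hxA.trans hAB) hx fun C hCB hdim => ?_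
  by_cases hxC : x ≤ C
  · rw [sup_eq_left.mpr hxC]
  have hAC : C ⊔ A = B := sup_eq_of_finrank_eq_succ hCB hdim hAB fun h => hxC (hxA.trans h)
  have hCx : C ⊔ x = B := sup_eq_of_finrank_eq_succ hCB hdim (hxA.trans hAB) hxC
  have hdimA : finrank K A = finrank K ↥(A ⊓ C) + 1 :=
    finrank_eq_finrank_inf_add_one (by rwa [sup_comm, hAC])
  have hrA : r A = r (A ⊓ C) := by
    have := hcyc (A ⊓ C) inf_le_left hdimA
    rwa [sup_eq_of_finrank_eq_succ inf_le_left hdimA hxA fun h => hxC (h.trans inf_le_right)]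
      at this
  have hsub := hM.2.2 A C
  rw [sup_comm, hAC] at hsub
  rw [hCx]
  linarith [hM.monotone hCB]

theorem qcyc_eq_of_rank_lt {r : Submodule K E → ℤ} (hM : QMat r) {A H : Submodule K E}
    (hHA : H ≤ A) (hdim : finrank K A = finrank K H + 1) (hr : r H < r A) :
    qcyc r A = qcyc r H := by
  refine le_antisymm (sSup_le fun x ⟨hxA, hx, hcyc⟩ => ?_) (qcyc_mono hM hHA)
  have hxH : x ≤ H := by
    by_contra hxH
    have := hcyc H hHA hdim
    rw [sup_eq_of_finrank_eq_succ hHA hdim hxA hxH] at this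
    omega
  refine le_qcyc hxH hx fun B hBH hdimB => ?_
  by_cases hxB : x ≤ B
  · rw [sup_eq_left.mpr hxB]
  have hBx : B ⊔ x = H := sup_eq_of_finrank_eq_succ hBH hdimB hxH hxB
  obtain ⟨y, hyA, hyH⟩ := SetLike.exists_of_lt (lt_of_le_of_ne hHA (by rintro rfl; omega))
  have hyB : y ∉ B := fun h => hyH (hBH h)
  set H' := B ⊔ K ∙ y
  have hdimH' : finrank K H' = finrank K B + 1 := finrank_sup_span_singleton hyB
  have hH'A : H' ≤ A := sup_le (hBH.trans hHA) ((span_singleton_le_iff_mem y A).mpr hyA)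
  have hxH' : ¬ x ≤ H' := fun h => hyH <| by
    have hHH' : H = H' := eq_of_le_of_finrank_eq (hBx ▸ sup_le le_sup_left h) (by omega)
    exact hHH' ▸ mem_sup_right (mem_span_singleton_self y)
  have hrH' : r A = r H' := by
    have := hcyc H' hH'A (by omega)
    rwa [sup_eq_of_finrank_eq_succ hH'A (by omega) hxA hxH'] at this
  have hy : finrank K (K ∙ y) = 1 := finrank_span_singleton fun h => hyB (h ▸ zero_mem B)
  rw [hBx]
  linarith [hM.rank_sup_le_add_one B hy, hM.monotone hBH]

theorem qcyclic_qcyc {r : Submodule K E → ℤ} (hM : QMat r) (A : Submodule K E) :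
    QCyclic r (qcyc r A) := by
  induction hn : finrank K A using Nat.strong_induction_on generalizing A with
  | _ n ih =>
  by_cases hA : QCyclic r A
  · rwa [qcyc_eq_self_of_qcyclic hM.monotone hA]
  obtain ⟨H, hHA, hdim, hne⟩ : ∃ H ≤ A, finrank K A = finrank K H + 1 ∧ r H ≠ r A := by
    simpa [QCyclic] using hA
  rw [qcyc_eq_of_rank_lt hM hHA hdim (lt_of_le_of_ne (hM.monotone hHA) hne)]
  exact ih _ (by omega) H rfl

end

/-- the cyclic operator satisfies (cyc1)-(cyc3). -/
theorem qcyc_properties (r : Submodule K E → ℤ) (hM : QMat r) :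
    (∀ A : Submodule K E, qcyc r A ≤ A) ∧
    (∀ A B : Submodule K E, A ≤ B → qcyc r A ≤ qcyc r B) ∧
    (∀ A : Submodule K E, qcyc r (qcyc r A) = qcyc r A) :=
  ⟨qcyc_le r, fun _ _ => qcyc_mono hM,
    fun A => qcyc_eq_self_of_qcyclic hM.monotone (qcyclic_qcyc hM A)⟩
end

section
/- If C_1, ..., C_ℓ are cyclic subspaces of a q-matroid (E,r), then their vector-space sum C_1 + ... + C_ℓ is also cyclic. -/
open Module Submodule

variable {K E : Type*} [Field K] [Fintype K] [AddCommGroup E] [Module K E]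
  [FiniteDimensional K E]

/-!
If `D` is a hyperplane of `S = ⨆ i, C i`, some `C i` is not contained in `D`; then
`D ⊔ C i = S` and `D ⊓ C i` is a hyperplane of `C i`, so cyclicity gives
`r (D ⊓ C i) = r (C i)` and submodularity yields `r S ≤ r D`.
-/

section LinearAlgebra

variable {K E : Type*} [DivisionRing K] [AddCommGroup E] [Module K E]

theorem Submodule.sup_eq_of_finrank_eq_add_one [FiniteDimensional K E]
    {A D S : Submodule K E} (hDS : D ≤ S) (hAS : A ≤ S) (hAD : ¬ A ≤ D)
    (hrank : finrank K S = finrank K D + 1) : D ⊔ A = S := by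
  have hlt : finrank K D < finrank K ↥(D ⊔ A) :=
    finrank_lt_finrank_of_lt (left_lt_sup.mpr hAD)
  exact eq_of_le_of_finrank_le (sup_le hDS hAS) (by omega)

theorem Submodule.finrank_eq_finrank_inf_add_one [FiniteDimensional K E]
    {A D S : Submodule K E} (hDS : D ≤ S) (hAS : A ≤ S) (hAD : ¬ A ≤ D)
    (hrank : finrank K S = finrank K D + 1) : finrank K A = finrank K ↥(D ⊓ A) + 1 := by
  have hmod := finrank_sup_add_finrank_inf_eq D A
  rw [sup_eq_of_finrank_eq_add_one hDS hAS hAD hrank] at hmod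
  omega

end LinearAlgebra

section QMatroid

variable {K E : Type*} [Field K] [AddCommGroup E] [Module K E]

theorem QMat.rank_sup_eq_of_rank_inf_eq {r : Submodule K E → ℤ} (hM : QMat r)
    {A D : Submodule K E} (h : r (D ⊓ A) = r A) : r (D ⊔ A) = r D := by
  have hsubmod := hM.2.2 D A
  have hmono := hM.2.1 D (D ⊔ A) le_sup_left
  omega

theorem QCyclic.rank_eq_of_finrank_eq_add_one [FiniteDimensional K E]
    {r : Submodule K E → ℤ} (hM : QMat r) {A D S : Submodule K E} (hA : QCyclic r A)
    (hDS : D ≤ S) (hAS : A ≤ S) (hAD : ¬ A ≤ D)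
    (hrank : finrank K S = finrank K D + 1) : r D = r S := by
  rw [← sup_eq_of_finrank_eq_add_one hDS hAS hAD hrank]
  exact (hM.rank_sup_eq_of_rank_inf_eq
    (hA _ inf_le_right (finrank_eq_finrank_inf_add_one hDS hAS hAD hrank))).symm

end QMatroid

/-- the vector-space sum of cyclic subspaces is cyclic. -/
theorem sum_cyclic_is_cyclic (r : Submodule K E → ℤ) (hM : QMat r)
    (ℓ : ℕ) (C : Fin ℓ → Submodule K E) (hC : ∀ i, QCyclic r (C i)) :
    QCyclic r (⨆ i, C i) := by
  intro D hD hrank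
  obtain ⟨i, hi⟩ : ∃ i, ¬ C i ≤ D := by
    by_contra! h
    rw [le_antisymm (iSup_le h) hD] at hrank
    omega
  exact (hC i).rank_eq_of_finrank_eq_add_one hM hD (le_iSup C i) hi hrank
end

section
/- In a q-matroid, if A ≤ E and X ≤ A is a complement of cyc(A) in A (i.e., A = cyc(A) ⊕ X), then X is an independent space. -/
/-! A dependent complement `X` contains a circuit `C`, and circuits of `A` lie in `cyc(A)`: if a
hyperplane `B` of `A` does not contain `C`, then `C ⊓ B` is a hyperplane of `C`, hence independent,
and submodularity gives `r A + (dim C - 1) ≤ r C + r B ≤ (dim C - 1) + r B`, so adding a line of `C`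
to `B` does not raise the rank. Thus `C ≤ cyc(A) ⊓ X = 0`, which is impossible. -/

open Module Submodule

variable {K E : Type*} [Field K] [Fintype K] [AddCommGroup E] [Module K E]
  [FiniteDimensional K E]

def IsQCircuit {K E : Type*} [Field K] [AddCommGroup E] [Module K E]
    (r : Submodule K E → ℤ) (C : Submodule K E) : Prop :=
  Minimal (fun D => r D < dimz D) C

section

variable {K E : Type*} [Field K] [AddCommGroup E] [Module K E] {r : Submodule K E → ℤ}
  {A B C D X : Submodule K E}

theorem dimz_bot : dimz (⊥ : Submodule K E) = 0 := by
  simp [dimz]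

theorem QMat.rank_bot (hM : QMat r) : r ⊥ = 0 := by
  have hbounds := hM.1 ⊥
  rw [dimz_bot] at hbounds
  omega

theorem IsQCircuit.rank_eq_dimz_of_lt (hM : QMat r) (hC : IsQCircuit r C) (hDC : D < C) :
    r D = dimz D :=
  (hM.1 D).2.eq_of_not_lt fun hD => hDC.not_ge (hC.2 hD hDC.le)

theorem IsQCircuit.ne_bot (hM : QMat r) (hC : IsQCircuit r C) : C ≠ ⊥ := by
  rintro rfl
  have hdep : r ⊥ < dimz ⊥ := hC.1
  rw [hM.rank_bot, dimz_bot] at hdep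
  exact lt_irrefl 0 hdep

variable [FiniteDimensional K E]

theorem QMat.exists_isQCircuit_le (hM : QMat r) (hX : r X ≠ dimz X) :
    ∃ C ≤ X, IsQCircuit r C :=
  exists_minimal_le_of_wellFoundedLT _ X (lt_of_le_of_ne (hM.1 X).2 hX)

theorem Submodule.sup_eq_of_finrank_eq_add_one_s8 (hBA : B ≤ A)
    (hdim : finrank K A = finrank K B + 1) (hCA : C ≤ A) (hCB : ¬ C ≤ B) : C ⊔ B = A := by
  have hlt : B < C ⊔ B := lt_of_le_of_ne le_sup_right fun h => hCB (h ▸ le_sup_left)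
  have hfinrank := finrank_lt_finrank_of_lt hlt
  exact eq_of_le_of_finrank_le (sup_le hCA hBA) (by omega)

theorem IsQCircuit.rank_eq_of_not_le (hM : QMat r) (hC : IsQCircuit r C) (hCA : C ≤ A)
    (hBA : B ≤ A) (hdim : finrank K A = finrank K B + 1) (hCB : ¬ C ≤ B) : r A = r B := by
  have hsup : C ⊔ B = A := sup_eq_of_finrank_eq_add_one_s8 hBA hdim hCA hCB
  have hinf : C ⊓ B < C := lt_of_le_of_ne inf_le_left fun h => hCB (h ▸ inf_le_right)
  have hdim_inf : finrank K ↥(C ⊓ B) + 1 = finrank K C := by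
    have hgrassmann := finrank_sup_add_finrank_inf_eq C B
    rw [hsup] at hgrassmann
    omega
  have hr_inf : r (C ⊓ B) = dimz (C ⊓ B) := hC.rank_eq_dimz_of_lt hM hinf
  have hr_C : r C < dimz C := hC.1
  have hsubmod := hM.2.2 C B
  rw [hsup] at hsubmod
  have hmono := hM.2.1 B A hBA
  simp only [dimz] at hr_inf hr_C
  omega

theorem IsQCircuit.le_qcyc (hM : QMat r) (hC : IsQCircuit r C) (hCA : C ≤ A) :
    C ≤ qcyc r A := by
  intro c hc
  by_cases hc0 : c = 0
  · exact hc0 ▸ (qcyc r A).zero_mem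
  have hcC : span K {c} ≤ C := span_singleton_le_iff_mem c C |>.mpr hc
  suffices hline : span K {c} ≤ qcyc r A from hline (mem_span_singleton_self c)
  refine le_sSup ⟨hcC.trans hCA, finrank_span_singleton hc0, fun B hBA hdim => ?_⟩
  by_cases hCB : C ≤ B
  · rw [sup_eq_left.mpr (hcC.trans hCB)]
  refine le_antisymm ?_ (hM.2.1 _ _ le_sup_left)
  rw [← hC.rank_eq_of_not_le hM hCA hBA hdim hCB]
  exact hM.2.1 _ _ (sup_le hBA (hcC.trans hCA))

end

theorem complement_of_qcyc_independent_general (r : Submodule K E → ℤ) (hM : QMat r)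
    (A X : Submodule K E) (hXA : X ≤ A)
    (hmeet : qcyc r A ⊓ X = ⊥) :
    r X = dimz X := by
  by_contra hX
  obtain ⟨C, hCX, hC⟩ := hM.exists_isQCircuit_le hX
  have hC_meet : C ≤ qcyc r A ⊓ X := le_inf (hC.le_qcyc hM (hCX.trans hXA)) hCX
  exact hC.ne_bot hM (le_bot_iff.mp (hmeet ▸ hC_meet))

/-- any complement of `cyc(A)` in `A` is independent. -/
theorem complement_of_qcyc_independent (r : Submodule K E → ℤ) (hM : QMat r)
    (A X : Submodule K E) (hXA : X ≤ A)
    (hmeet : qcyc r A ⊓ X = ⊥) (hjoin : qcyc r A ⊔ X = A) :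
    r X = dimz X :=
  complement_of_qcyc_independent_general r hM A X hXA hmeet
end

section
/- If X is a cyclic (cyclically closed) subspace of a q-matroid, then its closure cl(X) is a cyclic flat, i.e., cl(X) is both a flat and cyclic. -/
open Module Submodule

variable {K E : Type*} [Field K] [Fintype K] [AddCommGroup E] [Module K E]
  [FiniteDimensional K E]

/-!
Submodularity shows that if adding each of `B` and `C` to `A` keeps the rank, so does adding
`B ⊔ C`; since every family of subspaces of a finite-dimensional space has the same sum as a
finite subfamily, `r (cl X) = r X`. This makes `cl X` a flat. For cyclicity, let `B` be a
hyperplane of `F = cl X`. If `X ≤ B` then `r X ≤ r B ≤ r F = r X`. Otherwise `X ⊔ B = F` and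
`X ⊓ B` is a hyperplane of `X`, so `r (X ⊓ B) = r X`, and submodularity gives
`r F + r X ≤ r X + r B`.
-/

section RankSup

variable {α : Type*} {r : α → ℤ}

theorem rank_sup_sup_eq_s10 [Lattice α] (hmono : Monotone r)
    (hsub : ∀ A B, r (A ⊔ B) + r (A ⊓ B) ≤ r A + r B) {A B C : α}
    (hB : r (A ⊔ B) = r A) (hC : r (A ⊔ C) = r A) : r (A ⊔ (B ⊔ C)) = r A := by
  have hsup : (A ⊔ B) ⊔ (A ⊔ C) = A ⊔ (B ⊔ C) := by rw [sup_sup_sup_comm, sup_idem]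
  have hinf : r A ≤ r ((A ⊔ B) ⊓ (A ⊔ C)) := hmono (le_inf le_sup_left le_sup_left)
  have hle := hsub (A ⊔ B) (A ⊔ C)
  rw [hsup, hB, hC] at hle
  exact le_antisymm (by omega) (hmono le_sup_left)

theorem rank_sup_finset_sup_eq [Lattice α] [OrderBot α] (hmono : Monotone r)
    (hsub : ∀ A B, r (A ⊔ B) + r (A ⊓ B) ≤ r A + r B) {A : α} {t : Finset α}
    (ht : ∀ x ∈ t, r (A ⊔ x) = r A) : r (A ⊔ t.sup id) = r A := by
  classical
  induction t using Finset.induction_on with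
  | empty => simp
  | insert x t _ ih =>
    rw [Finset.sup_insert]
    exact rank_sup_sup_eq_s10 hmono hsub (ht x (Finset.mem_insert_self x t))
      (ih fun y hy => ht y (Finset.mem_insert_of_mem hy))

theorem rank_sup_sSup_eq [CompleteLattice α] [WellFoundedGT α] (hmono : Monotone r)
    (hsub : ∀ A B, r (A ⊔ B) + r (A ⊓ B) ≤ r A + r B) {A : α} {S : Set α}
    (hS : ∀ x ∈ S, r (A ⊔ x) = r A) : r (A ⊔ sSup S) = r A := by
  obtain ⟨t, htS, hSt⟩ := CompleteLattice.WellFoundedGT.isSupFiniteCompact α S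
  rw [hSt]
  exact rank_sup_finset_sup_eq hmono hsub fun x hx => hS x (htS hx)

end RankSup

section QMatroid

variable {K E : Type*} [Field K] [AddCommGroup E] [Module K E] {r : Submodule K E → ℤ}

theorem le_qcl (r : Submodule K E → ℤ) (X : Submodule K E) : X ≤ qcl r X := by
  intro v hv
  rcases eq_or_ne v 0 with rfl | hv0
  · exact zero_mem _
  · have hvX : K ∙ v ≤ X := (span_singleton_le_iff_mem v X).mpr hv
    have hspan : K ∙ v ≤ qcl r X :=
      le_sSup ⟨finrank_span_singleton hv0, by rw [sup_eq_left.mpr hvX]⟩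
    exact hspan (mem_span_singleton_self v)

theorem rank_qcl [FiniteDimensional K E] (hmono : Monotone r)
    (hsub : ∀ A B, r (A ⊔ B) + r (A ⊓ B) ≤ r A + r B) (X : Submodule K E) :
    r (qcl r X) = r X := by
  have hsup : r (X ⊔ qcl r X) = r X := rank_sup_sSup_eq hmono hsub fun _ hx => hx.2
  rwa [sup_eq_right.mpr (le_qcl r X)] at hsup

theorem qflat_qcl [FiniteDimensional K E] (hmono : Monotone r)
    (hsub : ∀ A B, r (A ⊔ B) + r (A ⊓ B) ≤ r A + r B) (X : Submodule K E) :
    QFlat r (qcl r X) := by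
  intro x hx hxF
  refine lt_of_le_of_ne (hmono le_sup_left) fun hFx => hxF (le_sSup ⟨hx, ?_⟩)
  refine le_antisymm ?_ (hmono le_sup_left)
  calc r (X ⊔ x) ≤ r (qcl r X ⊔ x) := hmono (sup_le_sup_right (le_qcl r X) x)
    _ = r (qcl r X) := hFx.symm
    _ = r X := rank_qcl hmono hsub X

theorem sup_eq_of_finrank_eq_add_one [FiniteDimensional K E] {X B F : Submodule K E}
    (hXF : X ≤ F) (hBF : B ≤ F) (hB : finrank K F = finrank K B + 1) (hXB : ¬ X ≤ B) :
    X ⊔ B = F := by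
  have hlt : finrank K B < finrank K ↥(X ⊔ B) :=
    finrank_lt_finrank_of_lt (lt_of_le_of_ne le_sup_right fun h => hXB (h ▸ le_sup_left))
  exact eq_of_le_of_finrank_le (sup_le hXF hBF) (by omega)

theorem finrank_eq_finrank_inf_add_one_of_sup_eq [FiniteDimensional K E]
    {X B F : Submodule K E} (hB : finrank K F = finrank K B + 1) (hXBF : X ⊔ B = F) :
    finrank K X = finrank K ↥(X ⊓ B) + 1 := by
  have hdim := finrank_sup_add_finrank_inf_eq X B
  rw [hXBF] at hdim
  omega

theorem QCyclic.of_le_of_rank_eq [FiniteDimensional K E] (hmono : Monotone r)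
    (hsub : ∀ A B, r (A ⊔ B) + r (A ⊓ B) ≤ r A + r B) {X F : Submodule K E}
    (hX : QCyclic r X) (hXF : X ≤ F) (hr : r F = r X) : QCyclic r F := by
  intro B hBF hB
  refine le_antisymm (hmono hBF) ?_
  by_cases hXB : X ≤ B
  · exact hr ▸ hmono hXB
  · have hXBF : X ⊔ B = F := sup_eq_of_finrank_eq_add_one hXF hBF hB hXB
    have hrinf : r (X ⊓ B) = r X :=
      hX (X ⊓ B) inf_le_left (finrank_eq_finrank_inf_add_one_of_sup_eq hB hXBF)
    have hle := hsub X B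
    rw [hXBF, hrinf] at hle
    omega

end QMatroid

/-- the closure of a cyclic subspace is a cyclic flat. -/
theorem qcl_of_cyclic_is_cyclic_flat (r : Submodule K E → ℤ) (hM : QMat r)
    (X : Submodule K E) (hX : QCyclic r X) :
    QFlat r (qcl r X) ∧ QCyclic r (qcl r X) := by
  obtain ⟨-, hmono, hsub⟩ := hM
  exact ⟨qflat_qcl hmono hsub X,
    hX.of_le_of_rank_eq hmono hsub (le_qcl r X) (rank_qcl hmono hsub X)⟩
end

section
/- If F is a cyclic flat of a q-matroid M and G < F is a subspace, then F/G is a cyclic flat of the contraction M/G, whose rank function is r_{M/G}(T/G) = r(T) - r(G). -/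
/-!
Subspaces of `E ⧸ G` correspond to subspaces of `E` containing `G` via `T ↦ T.comap G.mkQ`,
an order isomorphism that raises dimension by `dim G`. Under it, `F/G ⊔ x` for a line
`x ⊄ F/G` pulls back to `F ⊔ ⟨v⟩` with `v ∉ F`, and hyperplanes of `F/G` pull back to
hyperplanes of `F`; so flatness and cyclicity of `F/G` for `r_{M/G}` are those of `F` for `r`,
shifted by `r G`.
-/

open Module Submodule

variable {K E : Type*} [Field K] [Fintype K] [AddCommGroup E] [Module K E]
  [FiniteDimensional K E]

section

variable {K V : Type*} [Field K] [AddCommGroup V] [Module K V]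

/-- The rank function of the contraction `M/G`: a subspace `T` of `V ⧸ G` stands for `T/G` with
`G ≤ T ≤ V`, its preimage under the quotient map. -/
def qcontract (r : Submodule K V → ℤ) (G : Submodule K V) : Submodule K (V ⧸ G) → ℤ :=
  fun T => r (T.comap G.mkQ) - r G

theorem comap_mkQ_map_mkQ_of_le {F G : Submodule K V} (hGF : G ≤ F) :
    (F.map G.mkQ).comap G.mkQ = F := by
  rw [comap_map_mkQ, sup_eq_right.2 hGF]

theorem finrank_comap_mkQ [FiniteDimensional K V] (G : Submodule K V) (B : Submodule K (V ⧸ G)) :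
    finrank K (B.comap G.mkQ) = finrank K B + finrank K G := by
  set f := G.mkQ.comp (B.comap G.mkQ).subtype
  have hrange : LinearMap.range f = B := by
    rw [LinearMap.range_comp, range_subtype, map_comap_eq_of_surjective G.mkQ_surjective]
  have hker : LinearMap.ker f = G.comap (B.comap G.mkQ).subtype := by
    rw [LinearMap.ker_comp, ker_mkQ]
  rw [← f.finrank_range_add_finrank_ker, hrange, hker,
    (comapSubtypeEquivOfLe (le_comap_mkQ G B)).finrank_eq]

theorem exists_eq_span_mkQ_of_not_le_map_mkQ {F G : Submodule K V} {x : Submodule K (V ⧸ G)}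
    (hx : finrank K x = 1) (hxF : ¬ x ≤ F.map G.mkQ) :
    ∃ v ∉ F, x = K ∙ G.mkQ v := by
  obtain ⟨w, hwx, hwF⟩ := SetLike.not_le_iff_exists.1 hxF
  obtain ⟨v, rfl⟩ := G.mkQ_surjective w
  have hw0 : G.mkQ v ≠ 0 := fun h => hwF (h ▸ zero_mem _)
  exact ⟨v, fun hv => hwF (mem_map_of_mem hv),
    eq_span_singleton_of_mem_of_finrank_eq_one hx hwx hw0⟩

theorem QFlat.map_mkQ {r : Submodule K V → ℤ} {F G : Submodule K V} (hF : QFlat r F)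
    (hGF : G ≤ F) : QFlat (qcontract r G) (F.map G.mkQ) := by
  intro x hx hxF
  obtain ⟨v, hvF, rfl⟩ := exists_eq_span_mkQ_of_not_le_map_mkQ hx hxF
  have hv : ¬ (K ∙ v) ≤ F := by rwa [span_singleton_le_iff_mem]
  have hv0 : v ≠ 0 := fun h => hvF (h ▸ zero_mem F)
  have hsup : (F.map G.mkQ ⊔ K ∙ G.mkQ v).comap G.mkQ = F ⊔ K ∙ v := by
    rw [← Set.image_singleton, ← map_span, ← Submodule.map_sup,
      comap_mkQ_map_mkQ_of_le (hGF.trans le_sup_left)]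
  simp only [qcontract, comap_mkQ_map_mkQ_of_le hGF, hsup]
  linarith [hF _ (finrank_span_singleton hv0) hv]

theorem QCyclic.map_mkQ [FiniteDimensional K V] {r : Submodule K V → ℤ} {F G : Submodule K V}
    (hF : QCyclic r F) (hGF : G ≤ F) : QCyclic (qcontract r G) (F.map G.mkQ) := by
  intro B hB hdim
  have hBF : B.comap G.mkQ ≤ F := comap_mkQ_map_mkQ_of_le hGF ▸ comap_mono hB
  have hdimF : finrank K F = finrank K (B.comap G.mkQ) + 1 := by
    rw [← comap_mkQ_map_mkQ_of_le hGF, finrank_comap_mkQ, finrank_comap_mkQ, hdim]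
    ring
  simp only [qcontract, comap_mkQ_map_mkQ_of_le hGF, hF _ hBF hdimF]

end

theorem cyclic_flat_contraction_general (r : Submodule K E → ℤ)
    (F G : Submodule K E) (hF : QFlat r F ∧ QCyclic r F) (hGF : G < F) :
    QFlat (fun T : Submodule K (E ⧸ G) => r (T.comap G.mkQ) - r G)
        (F.map G.mkQ) ∧
    QCyclic (fun T : Submodule K (E ⧸ G) => r (T.comap G.mkQ) - r G)
        (F.map G.mkQ) :=
  ⟨hF.1.map_mkQ hGF.le, hF.2.map_mkQ hGF.le⟩

/-- if `F` is a cyclic flat and `G < F`, then `F/G` is a cyclic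
flat of the contraction `M/G`. -/
theorem cyclic_flat_contraction (r : Submodule K E → ℤ) (hM : QMat r)
    (F G : Submodule K E) (hF : QFlat r F ∧ QCyclic r F) (hGF : G < F) :
    QFlat (fun T : Submodule K (E ⧸ G) => r (T.comap G.mkQ) - r G)
        (F.map G.mkQ) ∧
    QCyclic (fun T : Submodule K (E ⧸ G) => r (T.comap G.mkQ) - r G)
        (F.map G.mkQ) :=
  cyclic_flat_contraction_general r F G hF hGF
end

section
/- Let (E,r) be a q-matroid and Z a collection of subspaces of E closed under the lattice operations with ranks satisfying (Z1)-(Z3). Then the function r_Z(A) := min{ r(F) + dim((A+F)/F) : F ∈ Z } satisfies the rank axioms (R1)-(R3), so (E, r_Z) is a q-matroid. -/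
/-!
Let `F` and `G` realise the minima defining `r_Z(A)` and `r_Z(B)`. Testing `A ⊔ B` against
the closure `F' ⊇ F ⊔ G` and `A ⊓ B` against the cyclic core `G' ⊆ F ⊓ G` bounds
`r_Z(A ⊔ B) + r_Z(A ⊓ B)`; (Z3) pays for the ranks of `F'` and `G'`, and the remaining
dimension terms are controlled by modularity of `dim`, because `(A ⊓ B) ⊔ (F ⊓ G)` lies in
`(A ⊔ F) ⊓ (B ⊔ G)`.
-/

open Module Submodule

variable {K E : Type*} [Field K] [Fintype K] [AddCommGroup E] [Module K E]
  [FiniteDimensional K E]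

section Dimension

variable {𝕜 V : Type*} [Field 𝕜] [AddCommGroup V] [Module 𝕜 V]

lemma dimz_nonneg (A : Submodule 𝕜 V) : 0 ≤ dimz A :=
  Int.natCast_nonneg _

variable [FiniteDimensional 𝕜 V]

lemma dimz_mono {A B : Submodule 𝕜 V} (h : A ≤ B) : dimz A ≤ dimz B := by
  unfold dimz
  exact_mod_cast Submodule.finrank_mono h

lemma dimz_sup_add_dimz_inf (A B : Submodule 𝕜 V) :
    dimz (A ⊔ B) + dimz (A ⊓ B) = dimz A + dimz B := by
  unfold dimz
  exact_mod_cast Submodule.finrank_sup_add_finrank_inf_eq A B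

lemma dimz_sup_sub_dimz_le {X H F : Submodule 𝕜 V} (h : H ≤ F) :
    dimz (X ⊔ F) - dimz F ≤ dimz (X ⊔ H) - dimz H := by
  have hsup : X ⊔ H ⊔ F = X ⊔ F := by rw [sup_assoc, sup_eq_right.mpr h]
  have hmod := dimz_sup_add_dimz_inf (X ⊔ H) F
  have hH : dimz H ≤ dimz ((X ⊔ H) ⊓ F) := dimz_mono (le_inf le_sup_right h)
  rw [hsup] at hmod
  linarith

lemma dimz_sup_sub_add_dimz_inf_sup_sub_le {A B F G F' G' : Submodule 𝕜 V}
    (hF' : F ⊔ G ≤ F') (hG' : G' ≤ F ⊓ G) :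
    (dimz (A ⊔ B ⊔ F') - dimz F') + (dimz (A ⊓ B ⊔ G') - dimz G') ≤
      (dimz (A ⊔ F) - dimz F) + (dimz (B ⊔ G) - dimz G) + (dimz (F ⊓ G) - dimz G') := by
  have hsup := dimz_sup_sub_dimz_le (X := A ⊔ B) hF'
  have hinf : A ⊓ B ⊔ G' ≤ (A ⊔ F) ⊓ (B ⊔ G) :=
    sup_le (inf_le_inf le_sup_left le_sup_left)
      (hG'.trans (inf_le_inf le_sup_right le_sup_right))
  have hmodAB := dimz_sup_add_dimz_inf (A ⊔ F) (B ⊔ G)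
  rw [sup_sup_sup_comm] at hmodAB
  have hmodFG := dimz_sup_add_dimz_inf F G
  linarith [dimz_mono hinf]

end Dimension

lemma le_qcl_s17 {𝕜 V : Type*} [Field 𝕜] [AddCommGroup V] [Module 𝕜 V]
    (r : Submodule 𝕜 V → ℤ) (A : Submodule 𝕜 V) : A ≤ qcl r A := by
  intro v hv
  by_cases hv0 : v = 0
  · simp [hv0]
  · refine le_sSup (?_ : span 𝕜 {v} ∈ _) (mem_span_singleton_self v)
    refine ⟨finrank_span_singleton hv0, ?_⟩
    rw [sup_eq_left.mpr ((span_singleton_le_iff_mem v A).mpr hv)]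

lemma qcyc_le_s17 {𝕜 V : Type*} [Field 𝕜] [AddCommGroup V] [Module 𝕜 V]
    (r : Submodule 𝕜 V → ℤ) (A : Submodule 𝕜 V) : qcyc r A ≤ A :=
  sSup_le fun _ hx => hx.1

section InducedRank

variable {𝕜 V : Type*} [Field 𝕜] [AddCommGroup V] [Module 𝕜 V] [FiniteDimensional 𝕜 V]
  {r : Submodule 𝕜 V → ℤ} {Z : Set (Submodule 𝕜 V)}

/-- The paper's `r_Z`; `dimz (A ⊔ F) - dimz F` is `dim ((A + F) / F)`. -/
noncomputable def inducedRank (r : Submodule 𝕜 V → ℤ) (Z : Set (Submodule 𝕜 V))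
    (A : Submodule 𝕜 V) : ℤ :=
  sInf ((fun F => r F + (dimz (A ⊔ F) - dimz F)) '' Z)

lemma bddBelow_inducedRank_image (hr : ∀ F ∈ Z, 0 ≤ r F) (A : Submodule 𝕜 V) :
    BddBelow ((fun F => r F + (dimz (A ⊔ F) - dimz F)) '' Z) := by
  refine ⟨0, ?_⟩
  rintro _ ⟨F, hF, rfl⟩
  linarith [hr F hF, dimz_mono (le_sup_right : F ≤ A ⊔ F)]

lemma inducedRank_le (hr : ∀ F ∈ Z, 0 ≤ r F) (A : Submodule 𝕜 V) {F : Submodule 𝕜 V}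
    (hF : F ∈ Z) : inducedRank r Z A ≤ r F + (dimz (A ⊔ F) - dimz F) :=
  csInf_le (bddBelow_inducedRank_image hr A) ⟨F, hF, rfl⟩

lemma exists_inducedRank_eq (hr : ∀ F ∈ Z, 0 ≤ r F) (hZ : Z.Nonempty) (A : Submodule 𝕜 V) :
    ∃ F ∈ Z, r F + (dimz (A ⊔ F) - dimz F) = inducedRank r Z A :=
  Int.csInf_mem (hZ.image _) (bddBelow_inducedRank_image hr A)

lemma inducedRank_nonneg (hr : ∀ F ∈ Z, 0 ≤ r F) (hZ : Z.Nonempty) (A : Submodule 𝕜 V) :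
    0 ≤ inducedRank r Z A := by
  obtain ⟨F, hF, hFA⟩ := exists_inducedRank_eq hr hZ A
  linarith [hr F hF, dimz_mono (le_sup_right : F ≤ A ⊔ F)]

lemma inducedRank_le_dimz (hr : ∀ F ∈ Z, 0 ≤ r F) {Z0 : Submodule 𝕜 V} (hZ0 : Z0 ∈ Z)
    (hrZ0 : r Z0 = 0) (A : Submodule 𝕜 V) : inducedRank r Z A ≤ dimz A := by
  have hA := dimz_sup_add_dimz_inf A Z0
  linarith [inducedRank_le hr A hZ0, dimz_nonneg (A ⊓ Z0)]

lemma inducedRank_mono (hr : ∀ F ∈ Z, 0 ≤ r F) (hZ : Z.Nonempty) {A B : Submodule 𝕜 V}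
    (h : A ≤ B) : inducedRank r Z A ≤ inducedRank r Z B := by
  obtain ⟨F, hF, hFB⟩ := exists_inducedRank_eq hr hZ B
  linarith [inducedRank_le hr A hF, dimz_mono (sup_le_sup_right h F)]

lemma inducedRank_submodular (hr : ∀ F ∈ Z, 0 ≤ r F) (hZ : Z.Nonempty)
    (hZ3 : ∀ F ∈ Z, ∀ G ∈ Z, ∃ F' ∈ Z, ∃ G' ∈ Z, F ⊔ G ≤ F' ∧ G' ≤ F ⊓ G ∧
      r F' + r G' + (dimz (F ⊓ G) - dimz G') ≤ r F + r G)
    (A B : Submodule 𝕜 V) :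
    inducedRank r Z (A ⊔ B) + inducedRank r Z (A ⊓ B) ≤
      inducedRank r Z A + inducedRank r Z B := by
  obtain ⟨F, hF, hFA⟩ := exists_inducedRank_eq hr hZ A
  obtain ⟨G, hG, hGB⟩ := exists_inducedRank_eq hr hZ B
  obtain ⟨F', hF'Z, G', hG'Z, hF', hG', hrank⟩ := hZ3 F hF G hG
  linarith [inducedRank_le hr (A ⊔ B) hF'Z, inducedRank_le hr (A ⊓ B) hG'Z,
    dimz_sup_sub_add_dimz_inf_sup_sub_le (A := A) (B := B) hF' hG']

lemma qMat_inducedRank (hr : ∀ F ∈ Z, 0 ≤ r F) {Z0 : Submodule 𝕜 V} (hZ0 : Z0 ∈ Z)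
    (hrZ0 : r Z0 = 0)
    (hZ3 : ∀ F ∈ Z, ∀ G ∈ Z, ∃ F' ∈ Z, ∃ G' ∈ Z, F ⊔ G ≤ F' ∧ G' ≤ F ⊓ G ∧
      r F' + r G' + (dimz (F ⊓ G) - dimz G') ≤ r F + r G) :
    QMat (inducedRank r Z) :=
  ⟨fun A => ⟨inducedRank_nonneg hr ⟨Z0, hZ0⟩ A, inducedRank_le_dimz hr hZ0 hrZ0 A⟩,
    fun _ _ => inducedRank_mono hr ⟨Z0, hZ0⟩,
    inducedRank_submodular hr ⟨Z0, hZ0⟩ hZ3⟩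

end InducedRank

theorem rZ_is_qmatroid_general (r : Submodule K E → ℤ) (hM : QMat r)
    (Z : Set (Submodule K E))
    (hclosed : ∀ F ∈ Z, ∀ G ∈ Z, qcl r (F ⊔ G) ∈ Z ∧ qcyc r (F ⊓ G) ∈ Z)
    (Z0 : Submodule K E) (hZ0 : Z0 ∈ Z)
    (hZ1 : r Z0 = 0)
    (hZ3 : ∀ F ∈ Z, ∀ G ∈ Z,
      r (qcl r (F ⊔ G)) + r (qcyc r (F ⊓ G)) +
        (dimz (F ⊓ G) - dimz (qcyc r (F ⊓ G))) ≤ r F + r G) :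
    QMat (fun A : Submodule K E =>
      sInf ((fun F => r F + (dimz (A ⊔ F) - dimz F)) '' Z)) :=
  qMat_inducedRank (fun F _ => (hM.1 F).1) hZ0 hZ1 fun F hF G hG =>
    ⟨_, (hclosed F hF G hG).1, _, (hclosed F hF G hG).2,
      le_qcl_s17 r (F ⊔ G), qcyc_le_s17 r (F ⊓ G), hZ3 F hF G hG⟩

/-- if `Z` is closed under the lattice operations and satisfies
(Z1)-(Z3), then `r_Z(A) = min { r F + dim((A+F)/F) : F ∈ Z }` satisfies the
rank axioms (R1)-(R3), i.e. `(E, r_Z)` is a `q`-matroid. -/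
theorem rZ_is_qmatroid (r : Submodule K E → ℤ) (hM : QMat r)
    (Z : Set (Submodule K E))
    (hclosed : ∀ F ∈ Z, ∀ G ∈ Z, qcl r (F ⊔ G) ∈ Z ∧ qcyc r (F ⊓ G) ∈ Z)
    (Z0 : Submodule K E) (hZ0 : Z0 ∈ Z) (hZ0min : ∀ F ∈ Z, Z0 ≤ F)
    (hZ1 : r Z0 = 0)
    (hZ2 : ∀ F ∈ Z, ∀ G ∈ Z, G < F →
      0 < r F - r G ∧ r F - r G < dimz F - dimz G)
    (hZ3 : ∀ F ∈ Z, ∀ G ∈ Z,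
      r (qcl r (F ⊔ G)) + r (qcyc r (F ⊓ G)) +
        (dimz (F ⊓ G) - dimz (qcyc r (F ⊓ G))) ≤ r F + r G) :
    QMat (fun A : Submodule K E =>
      sInf ((fun F => r F + (dimz (A ⊔ F) - dimz F)) '' Z)) :=
  rZ_is_qmatroid_general r hM Z hclosed Z0 hZ0 hZ1 hZ3
end

section
/- If μ : L(E) → ℤ is an additive function on the lattice of subspaces of a finite-dimensional F_q-vector space E (i.e., μ(0) = 0 and μ(X+Y) = μ(X) + μ(Y) whenever X ∩ Y = 0), and dim E ≥ 2, then there exists ℓ ∈ ℤ with μ(A) = ℓ · dim(A) for all subspaces A ≤ E. -/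
open Module Submodule

variable {K E : Type*} [Field K] [Fintype K] [AddCommGroup E] [Module K E]
  [FiniteDimensional K E]

/-!
Two distinct lines `K ∙ u` and `K ∙ v` have the common complement `K ∙ (u + v)` in the plane
they span, so additivity forces `μ` to take a single value `ℓ` on all lines. Adjoining a vector
outside a subspace adds a line disjoint from it, raising `μ` by `ℓ` and the dimension by one;
building a subspace up from a finite spanning set gives `μ = dim • ℓ`.
-/

section Additive

variable {K E G : Type*} [Field K] [AddCommGroup E] [Module K E] [AddCancelCommMonoid G]
  {μ : Submodule K E → G}

theorem mem_span_singleton_symm {u v : E} (hu : u ≠ 0) (h : u ∈ K ∙ v) : v ∈ K ∙ u := by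
  obtain ⟨a, rfl⟩ := mem_span_singleton.mp h
  have ha : a ≠ 0 := by rintro rfl; simp at hu
  exact mem_span_singleton.mpr ⟨a⁻¹, inv_smul_smul₀ ha v⟩

theorem span_singleton_sup_span_singleton_add (u v : E) :
    K ∙ u ⊔ K ∙ (u + v) = K ∙ v ⊔ K ∙ (u + v) := by
  have hw_u : u + v ∈ K ∙ u ⊔ K ∙ (u + v) := mem_sup_right (mem_span_singleton_self _)
  have hw_v : u + v ∈ K ∙ v ⊔ K ∙ (u + v) := mem_sup_right (mem_span_singleton_self _)
  refine le_antisymm (sup_le ?_ le_sup_right) (sup_le ?_ le_sup_right)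
  · rw [span_singleton_le_iff_mem]
    exact (Submodule.add_mem_iff_left _ (mem_sup_left (mem_span_singleton_self v))).mp hw_v
  · rw [span_singleton_le_iff_mem]
    exact (Submodule.add_mem_iff_right _ (mem_sup_left (mem_span_singleton_self u))).mp hw_u

variable (hadd : ∀ X Y : Submodule K E, X ⊓ Y = ⊥ → μ (X ⊔ Y) = μ X + μ Y)
include hadd

theorem additive_bot : μ ⊥ = 0 := by
  simpa using hadd ⊥ ⊥ (bot_inf_eq ⊥)

theorem additive_span_singleton_eq {u v : E} (hu : u ≠ 0) (hv : v ≠ 0) :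
    μ (K ∙ u) = μ (K ∙ v) := by
  by_cases hvu : v ∈ K ∙ u
  · obtain ⟨a, rfl⟩ := mem_span_singleton.mp hvu
    have ha : a ≠ 0 := by rintro rfl; simp at hv
    rw [span_singleton_smul_eq ha.isUnit]
  have huv : u ∉ K ∙ v := fun h ↦ hvu (mem_span_singleton_symm hu h)
  have hu_disj : K ∙ u ⊓ K ∙ (u + v) = ⊥ := (disjoint_span_singleton_of_notMem fun h ↦
    hvu ((Submodule.add_mem_iff_right _ (mem_span_singleton_self u)).mp h)).eq_bot
  have hv_disj : K ∙ v ⊓ K ∙ (u + v) = ⊥ := (disjoint_span_singleton_of_notMem fun h ↦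
    huv ((Submodule.add_mem_iff_left _ (mem_span_singleton_self v)).mp h)).eq_bot
  have := hadd _ _ hu_disj
  rw [span_singleton_sup_span_singleton_add, hadd _ _ hv_disj] at this
  exact (add_right_cancel this).symm

theorem exists_additive_span_singleton_eq : ∃ ℓ : G, ∀ v : E, v ≠ 0 → μ (K ∙ v) = ℓ := by
  rcases subsingleton_or_nontrivial E with _ | _
  · exact ⟨0, fun v hv ↦ (hv (Subsingleton.elim v 0)).elim⟩
  · obtain ⟨e, he⟩ := exists_ne (0 : E)
    exact ⟨μ (K ∙ e), fun v hv ↦ additive_span_singleton_eq hadd hv he⟩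

theorem additive_span_finset_eq [FiniteDimensional K E] {ℓ : G}
    (hℓ : ∀ v : E, v ≠ 0 → μ (K ∙ v) = ℓ) (s : Finset E) :
    μ (span K (s : Set E)) = finrank K (span K (s : Set E)) • ℓ := by
  classical
  induction s using Finset.induction_on with
  | empty => rw [Finset.coe_empty, span_empty, additive_bot hadd, finrank_bot, zero_smul]
  | insert v s _ ih =>
    rw [Finset.coe_insert, span_insert]
    by_cases hv : v ∈ span K (s : Set E)
    · rw [sup_eq_right.mpr ((span_singleton_le_iff_mem _ _).mpr hv), ih]
    have hv0 : v ≠ 0 := fun h ↦ hv (h ▸ zero_mem _)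
    rw [sup_comm, hadd _ _ (disjoint_span_singleton_of_notMem hv).eq_bot,
      finrank_sup_span_singleton hv, ih, hℓ v hv0, succ_nsmul]

theorem additive_eq_finrank_nsmul [FiniteDimensional K E] {ℓ : G}
    (hℓ : ∀ v : E, v ≠ 0 → μ (K ∙ v) = ℓ) (A : Submodule K E) :
    μ A = finrank K A • ℓ := by
  obtain ⟨s, rfl⟩ := (fg_iff_finiteDimensional A).mpr inferInstance
  exact additive_span_finset_eq hadd hℓ s

end Additive

theorem additive_is_multiple_of_dim_general (μ : Submodule K E → ℤ)
    (hadd : ∀ X Y : Submodule K E, X ⊓ Y = ⊥ → μ (X ⊔ Y) = μ X + μ Y) :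
    ∃ ℓ : ℤ, ∀ A : Submodule K E, μ A = ℓ * dimz A := by
  obtain ⟨ℓ, hℓ⟩ := exists_additive_span_singleton_eq hadd
  refine ⟨ℓ, fun A ↦ ?_⟩
  rw [additive_eq_finrank_nsmul hadd hℓ A, nsmul_eq_mul, mul_comm, dimz]

/-- an additive function on the lattice of subspaces is a
constant multiple of the dimension. -/
theorem additive_is_multiple_of_dim (μ : Submodule K E → ℤ)
    (h0 : μ ⊥ = 0)
    (hadd : ∀ X Y : Submodule K E, X ⊓ Y = ⊥ → μ (X ⊔ Y) = μ X + μ Y)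
    (hdim : 2 ≤ Module.finrank K E) :
    ∃ ℓ : ℤ, ∀ A : Submodule K E, μ A = ℓ * dimz A :=
  additive_is_multiple_of_dim_general μ hadd
end
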